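/- arXiv:2407.01729 — 5 statements merged into one kernel-verified Lean document; each statement's English description precedes it below -/
import Mathlib

section
/- If f : [a,b] → ℝⁿ is a continuous curve whose convex hull has nonempty interior (f is nonflat), then the average ave(f) = (1/(b-a)) ∫ₐᵇ f(s) ds lies in the interior of the convex hull of the image of f. -/
open Set intervalIntegral

/-- The average of a nonflat continuous curve lies in the interior of the convex hull
of its image. -/
theorem ave_mem_interior_convexHull {n : ℕ} (a b : ℝ) (hab : a < b)
    (f : ℝ → EuclideanSpace ℝ (Fin n)) (hf : ContinuousOn f (Icc a b))
    (hnonflat : (interior (convexHull ℝ (f '' Icc a b))).Nonempty) :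
    (b - a)⁻¹ • ∫ s in a..b, f s ∈ interior (convexHull ℝ (f '' Icc a b)) := by
  set K : Set (EuclideanSpace ℝ (Fin n)) := convexHull ℝ (f '' Icc a b) with hK
  set y : EuclideanSpace ℝ (Fin n) := (b - a)⁻¹ • ∫ s in a..b, f s with hy
  have hKconv : Convex ℝ K := convex_convexHull ℝ _
  obtain ⟨x0, hx0⟩ := hnonflat
  by_contra hyK
  -- separate `y` from the open convex set `interior K`
  obtain ⟨ℓ, hℓ⟩ := geometric_hahn_banach_open_point (hKconv.interior) isOpen_interior hyK
  have hx0lt : ℓ x0 < ℓ y := hℓ x0 hx0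
  -- every point of K satisfies ℓ x ≤ ℓ y
  have hle : ∀ x ∈ K, ℓ x ≤ ℓ y := by
    intro x hx
    have key : ∀ t : ℝ, t ∈ Ioo (0:ℝ) 1 → t * ℓ x0 + (1 - t) * ℓ x < ℓ y := by
      intro t ht
      have hmem : t • x0 + (1 - t) • x ∈ interior K :=
        hKconv.combo_interior_self_mem_interior hx0 hx ht.1 (by linarith [ht.2]) (by ring)
      have := hℓ _ hmem
      simpa [map_add, map_smul, smul_eq_mul] using this
    have htend : Filter.Tendsto (fun t : ℝ => t * ℓ x0 + (1 - t) * ℓ x)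
        (nhdsWithin 0 (Ioi 0)) (nhds (ℓ x)) := by
      have : Filter.Tendsto (fun t : ℝ => t * ℓ x0 + (1 - t) * ℓ x) (nhds 0)
          (nhds (0 * ℓ x0 + (1 - 0) * ℓ x)) := by
        apply Filter.Tendsto.add
        · exact (continuous_id.mul continuous_const).tendsto 0
        · exact ((continuous_const.sub continuous_id).mul continuous_const).tendsto 0
      simpa using this.mono_left nhdsWithin_le_nhds
    refine le_of_tendsto htend ?_
    filter_upwards [Ioo_mem_nhdsGT_of_mem (by norm_num : (0:ℝ) ∈ Ico (0:ℝ) 1)] with t ht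
    exact (key t ht).le
  -- f is interval integrable
  have hfi : IntervalIntegrable f MeasureTheory.volume a b := by
    apply ContinuousOn.intervalIntegrable
    rwa [uIcc_of_le hab.le]
  have hℓfi : IntervalIntegrable (fun s => ℓ (f s)) MeasureTheory.volume a b := by
    apply ContinuousOn.intervalIntegrable
    rw [uIcc_of_le hab.le]
    exact ℓ.continuous.comp_continuousOn hf
  -- compute ℓ y
  have hba : (0:ℝ) < b - a := by linarith
  have hℓy : ∫ s in a..b, ℓ (f s) = (b - a) * ℓ y := by
    rw [hy, map_smul, smul_eq_mul, ← ℓ.intervalIntegral_comp_comm hfi]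
    field_simp
  -- there is a point where ℓ (f s) < ℓ y
  have hexists : ∃ c ∈ Icc a b, ℓ (f c) < ℓ y := by
    by_contra h
    push_neg at h
    have heq : ∀ s ∈ Icc a b, ℓ (f s) = ℓ y := fun s hs =>
      le_antisymm (hle _ (subset_convexHull ℝ _ ⟨s, hs, rfl⟩)) (h s hs)
    have hsub : f '' Icc a b ⊆ {z | ℓ z = ℓ y} := by
      rintro _ ⟨s, hs, rfl⟩; exact heq s hs
    have : K ⊆ {z | ℓ z = ℓ y} :=
      convexHull_min hsub (convex_hyperplane ℓ.toLinearMap.isLinear _)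
    have : ℓ x0 = ℓ y := this (interior_subset hx0)
    linarith
  obtain ⟨c, hc, hclt⟩ := hexists
  -- the nonnegative continuous function ℓ y - ℓ (f s) has positive integral
  have hpos : 0 < ∫ s in a..b, (ℓ y - ℓ (f s)) := by
    apply intervalIntegral.integral_pos hab
    · exact continuousOn_const.sub (ℓ.continuous.comp_continuousOn hf)
    · intro x hx
      have : ℓ (f x) ≤ ℓ y :=
        hle _ (subset_convexHull ℝ _ ⟨x, Ioc_subset_Icc_self hx, rfl⟩)
      linarith
    · exact ⟨c, hc, by linarith⟩
  have hzero : ∫ s in a..b, (ℓ y - ℓ (f s)) = 0 := by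
    rw [intervalIntegral.integral_sub (intervalIntegrable_const) hℓfi, hℓy,
      intervalIntegral.integral_const]
    ring_nf
  linarith
end

section
/- Parametric Carathéodory: let p₁, …, p_N : [0,1] → ℝⁿ and x : [0,1] → ℝⁿ be continuous maps such that for every t, x(t) lies in the interior of the convex hull of {p₁(t), …, p_N(t)}. Then there exist continuous functions a₁, …, a_N : [0,1] → ℝ with aᵢ(t) > 0, Σᵢ aᵢ(t) = 1, and Σᵢ aᵢ(t) pᵢ(t) = x(t) for all t. -/
open Set Topology

section ParamCara

variable {n N : ℕ}

local notation "E" => EuclideanSpace ℝ (Fin n)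

/-- Strictly positive weights for a point in the interior of a convex hull. -/
lemma exists_pos_weights (f : Fin N → E) {y : E}
    (hy : y ∈ interior (convexHull ℝ (Set.range f))) :
    ∃ w : Fin N → ℝ, (∀ i, 0 < w i) ∧ (∑ i, w i = 1) ∧ (∑ i, w i • f i = y) := by
  have hne : (Set.range f).Nonempty := by
    rcases convexHull_nonempty_iff.mp ⟨y, interior_subset hy⟩ with h
    exact h
  have hNpos : 0 < (N : ℝ) := by
    rcases hne with ⟨_, i, _⟩
    have : 0 < N := i.pos
    exact_mod_cast this
  set c : E := (N : ℝ)⁻¹ • ∑ i, f i with hc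
  have hcont : Continuous fun ε : ℝ => y + ε • (y - c) := by continuity
  have h0 : (fun ε : ℝ => y + ε • (y - c)) 0 = y := by simp
  have hpre : (fun ε : ℝ => y + ε • (y - c)) ⁻¹' interior (convexHull ℝ (Set.range f)) ∈ 𝓝 (0:ℝ) := by
    apply hcont.continuousAt.preimage_mem_nhds
    rw [zero_smul, add_zero]
    exact isOpen_interior.mem_nhds hy
  obtain ⟨δ, hδ, hball⟩ := Metric.mem_nhds_iff.mp hpre
  set ε : ℝ := δ / 2 with hε
  have hεpos : 0 < ε := by positivity
  have hεball : ε ∈ Metric.ball (0:ℝ) δ := by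
    simp only [Metric.mem_ball, Real.dist_eq, sub_zero, abs_of_pos hεpos]
    linarith
  have hz : y + ε • (y - c) ∈ convexHull ℝ (Set.range f) :=
    interior_subset (hball hεball)
  rw [convexHull_range_eq_exists_affineCombination] at hz
  obtain ⟨s, w0, hw0, hw0sum, hcomb⟩ := hz
  rw [Finset.affineCombination_eq_linear_combination s f w0 hw0sum] at hcomb
  set u : Fin N → ℝ := fun i => if i ∈ s then w0 i else 0 with hu
  have husum : ∑ i, u i = 1 := by
    rw [← hw0sum]
    rw [Finset.sum_ite_mem, Finset.univ_inter]
  have hucomb : ∑ i, u i • f i = y + ε • (y - c) := by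
    rw [← hcomb]
    have : ∑ i, u i • f i = ∑ i, (if i ∈ s then w0 i • f i else 0) := by
      apply Finset.sum_congr rfl
      intro i _
      by_cases h : i ∈ s <;> simp [hu, h]
    rw [this, Finset.sum_ite_mem, Finset.univ_inter]
  have hunn : ∀ i, 0 ≤ u i := by
    intro i
    by_cases h : i ∈ s <;> simp [hu, h, hw0 i]
  refine ⟨fun i => (1 + ε)⁻¹ * u i + (1 + ε)⁻¹ * ε * (N : ℝ)⁻¹, ?_, ?_, ?_⟩
  · intro i
    have h1 : (0:ℝ) < (1 + ε)⁻¹ := by positivity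
    have h2 : (0:ℝ) < (1 + ε)⁻¹ * ε * (N : ℝ)⁻¹ := by positivity
    have := mul_nonneg h1.le (hunn i)
    linarith
  · rw [Finset.sum_add_distrib, ← Finset.mul_sum, husum, Finset.sum_const, Finset.card_univ,
      Fintype.card_fin, nsmul_eq_mul]
    field_simp
  · simp only [add_smul, Finset.sum_add_distrib, mul_smul, ← Finset.smul_sum, hucomb]
    rw [hc]
    match_scalars <;> field_simp <;> ring

/-- The sum linear map. -/
noncomputable def sumL (N : ℕ) : (Fin N → ℝ) →ₗ[ℝ] ℝ := ∑ i, LinearMap.proj i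

@[simp] lemma sumL_apply (w : Fin N → ℝ) : sumL N w = ∑ i, w i := by
  simp [sumL]

/-- The combination linear map. -/
noncomputable def combL (f : Fin N → E) : (Fin N → ℝ) →ₗ[ℝ] E :=
  ∑ i, (LinearMap.proj (R := ℝ) (φ := fun _ : Fin N => ℝ) i).smulRight (f i)

@[simp] lemma combL_apply (f : Fin N → E) (w : Fin N → ℝ) :
    combL f w = ∑ i, w i • f i := by
  simp [combL]

lemma surj_comb (f : Fin N → E)
    (hne : (interior (convexHull ℝ (Set.range f))).Nonempty) :
    ∀ v : E × ℝ, ∃ w : Fin N → ℝ, (∑ i, w i • f i, ∑ i, w i) = v := by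
  obtain ⟨y, hy⟩ := hne
  have hrne : (Set.range f).Nonempty :=
    convexHull_nonempty_iff.mp ⟨y, interior_subset hy⟩
  obtain ⟨_, i0, rfl⟩ := hrne
  have hspan : affineSpan ℝ (Set.range f) = ⊤ :=
    affineSpan_eq_top_of_nonempty_interior ⟨y, hy⟩
  have hvspan : vectorSpan ℝ (Set.range f) = ⊤ := by
    rw [← direction_affineSpan, hspan, AffineSubspace.direction_top]
  set Z : Submodule ℝ E := Submodule.map (combL f) (LinearMap.ker (sumL N)) with hZ
  have hZtop : Z = ⊤ := by
    rw [eq_top_iff, ← hvspan, vectorSpan_def, Submodule.span_le]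
    rintro v ⟨a, ⟨i, rfl⟩, b, ⟨j, rfl⟩, rfl⟩
    refine ⟨Pi.single i 1 - Pi.single j 1, ?_, ?_⟩
    · simp [LinearMap.mem_ker, Finset.sum_sub_distrib]
    · simp [sub_smul, Finset.sum_sub_distrib, Pi.single_apply, ite_smul]
  rintro ⟨v, c⟩
  have hv : v - c • f i0 ∈ Z := by rw [hZtop]; trivial
  obtain ⟨u, hu0, huv⟩ := hv
  rw [SetLike.mem_coe, LinearMap.mem_ker, sumL_apply] at hu0
  rw [combL_apply] at huv
  refine ⟨fun i => u i + (if i = i0 then c else 0), ?_⟩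
  have h1 : ∑ i, (u i + (if i = i0 then c else 0)) • f i = v := by
    simp only [add_smul, Finset.sum_add_distrib, huv, ite_smul, zero_smul,
      Finset.sum_ite_eq', Finset.mem_univ, if_true]
    abel
  have h2 : ∑ i, (u i + (if i = i0 then c else 0)) = c := by
    simp [Finset.sum_add_distrib, hu0, Finset.sum_ite_eq']
  rw [h1, h2]

/-- The combined combination/sum continuous linear map. -/
noncomputable def Tmap (f : Fin N → E) : (Fin N → ℝ) →L[ℝ] (E × ℝ) :=
  ∑ i, (ContinuousLinearMap.smulRightL ℝ (Fin N → ℝ) (E × ℝ)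
    (ContinuousLinearMap.proj i)) (f i, 1)

lemma Tmap_apply (f : Fin N → E) (w : Fin N → ℝ) :
    Tmap f w = (∑ i, w i • f i, ∑ i, w i) := by
  have hs : ∀ (c : (Fin N → ℝ) →L[ℝ] ℝ) (v : E × ℝ),
      ContinuousLinearMap.smulRightL ℝ (Fin N → ℝ) (E × ℝ) c v = c.smulRight v := fun _ _ => rfl
  simp only [Tmap, ContinuousLinearMap.sum_apply, hs, ContinuousLinearMap.smulRight_apply,
    ContinuousLinearMap.proj_apply, Prod.smul_mk, smul_eq_mul, mul_one]
  exact Prod.ext (by simp [Prod.fst_sum]) (by simp [Prod.snd_sum])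


/-- Local continuous selection of positive barycentric coordinates. -/
lemma local_selection (p : Fin N → ℝ → E) (x : ℝ → E)
    (hp : ∀ i, ContinuousOn (p i) (Icc 0 1)) (hx : ContinuousOn x (Icc 0 1))
    (hmem : ∀ t ∈ Icc (0 : ℝ) 1,
      x t ∈ interior (convexHull ℝ (Set.range fun i => p i t)))
    (s₀ : ↥(Icc (0:ℝ) 1)) :
    ∃ U ∈ 𝓝 s₀, ∃ g : ↥(Icc (0:ℝ) 1) → (Fin N → ℝ), ContinuousOn g U ∧
      ∀ s ∈ U, (∀ i, 0 < g s i) ∧ (∑ i, g s i = 1) ∧ (∑ i, g s i • p i ↑s = x ↑s) := by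
  have hPc : ∀ i, Continuous fun s : ↥(Icc (0:ℝ) 1) => p i ↑s := fun i =>
    continuousOn_iff_continuous_restrict.mp (hp i)
  have hXc : Continuous fun s : ↥(Icc (0:ℝ) 1) => x ↑s :=
    continuousOn_iff_continuous_restrict.mp hx
  have hm : ∀ s : ↥(Icc (0:ℝ) 1),
      x ↑s ∈ interior (convexHull ℝ (Set.range fun i => p i ↑s)) := fun s => hmem ↑s s.2
  obtain ⟨w₀, hw₀pos, hw₀sum, hw₀comb⟩ := exists_pos_weights (fun i => p i ↑s₀) (hm s₀)
  have hsurj := surj_comb (fun i => p i ↑s₀) ⟨_, hm s₀⟩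
  set T : ↥(Icc (0:ℝ) 1) → ((Fin N → ℝ) →L[ℝ] (E × ℝ)) :=
    fun s => Tmap (fun i => p i ↑s) with hTdef
  have hTcont : Continuous T := by
    apply continuous_finset_sum
    intro i _
    exact ((ContinuousLinearMap.smulRightL ℝ (Fin N → ℝ) (E × ℝ)
      (ContinuousLinearMap.proj i)).continuous).comp ((hPc i).prodMk continuous_const)
  have hTsurj : LinearMap.range ((T s₀ : (Fin N → ℝ) →L[ℝ] (E × ℝ)) :
      (Fin N → ℝ) →ₗ[ℝ] (E × ℝ)) = ⊤ := by
    rw [LinearMap.range_eq_top]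
    intro v
    obtain ⟨w, hw⟩ := hsurj v
    exact ⟨w, by rw [ContinuousLinearMap.coe_coe, hTdef, Tmap_apply]; exact hw⟩
  obtain ⟨R₀, hR₀⟩ := LinearMap.exists_rightInverse_of_surjective _ hTsurj
  set R : (E × ℝ) →L[ℝ] (Fin N → ℝ) := LinearMap.toContinuousLinearMap R₀ with hRdef
  have hRinv : ∀ v, T s₀ (R v) = v := by
    intro v
    have := LinearMap.ext_iff.mp hR₀ v
    simp at this
    exact this
  set A : ↥(Icc (0:ℝ) 1) → ((E × ℝ) →L[ℝ] (E × ℝ)) := fun s => (T s).comp R with hAdef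
  have hAcont : Continuous A := hTcont.clm_comp continuous_const
  have hAs₀ : A s₀ = 1 := ContinuousLinearMap.ext fun v => hRinv v
  set U₁ : Set ↥(Icc (0:ℝ) 1) := A ⁻¹' {B | IsUnit B} with hU₁def
  have hU₁open : IsOpen U₁ := Units.isOpen.preimage hAcont
  have hs₀U₁ : s₀ ∈ U₁ := by
    show IsUnit (A s₀)
    rw [hAs₀]
    exact isUnit_one
  set rhs : ↥(Icc (0:ℝ) 1) → E × ℝ :=
    fun s => ((x ↑s - ∑ i, w₀ i • p i ↑s : E), (0:ℝ)) with hrhsdef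
  have hrhscont : Continuous rhs :=
    (hXc.sub (continuous_finset_sum _ fun i _ => (hPc i).const_smul (w₀ i))).prodMk
      continuous_const
  set g : ↥(Icc (0:ℝ) 1) → (Fin N → ℝ) :=
    fun s => w₀ + R (Ring.inverse (A s) (rhs s)) with hgdef
  have hginvcont : ContinuousOn (fun s => Ring.inverse (A s)) U₁ := by
    intro s hs
    apply ContinuousAt.continuousWithinAt
    rcases (hs : IsUnit (A s)) with ⟨unit, hunit⟩
    have h1 : ContinuousAt Ring.inverse (A s) := by
      rw [← hunit]; exact NormedRing.inverse_continuousAt unit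
    exact h1.comp hAcont.continuousAt
  have hgcont : ContinuousOn g U₁ := by
    apply continuousOn_const.add
    exact R.continuous.comp_continuousOn (hginvcont.clm_apply hrhscont.continuousOn)
  have hrhs₀ : rhs s₀ = 0 := by
    rw [hrhsdef]
    simp only [hw₀comb, sub_self]
    rfl
  have hg₀ : g s₀ = w₀ := by
    rw [hgdef]
    simp [hrhs₀]
  have hgT : ∀ s ∈ U₁, (∑ i, g s i • p i ↑s = x ↑s) ∧ (∑ i, g s i = 1) := by
    intro s hs
    have hu : IsUnit (A s) := hs
    have h5 : T s (g s) = (x ↑s, 1) := by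
      have e1 : T s (g s) = T s w₀ + A s (Ring.inverse (A s) (rhs s)) := by
        rw [hgdef, map_add]
        rfl
      have e2 : A s (Ring.inverse (A s) (rhs s)) = rhs s := by
        have : A s * Ring.inverse (A s) = 1 := Ring.mul_inverse_cancel _ hu
        calc A s (Ring.inverse (A s) (rhs s))
            = (A s * Ring.inverse (A s)) (rhs s) := rfl
          _ = rhs s := by rw [this]; rfl
      rw [e1, e2, hTdef, Tmap_apply, hrhsdef, hw₀sum]
      ext <;> simp
    rw [hTdef, Tmap_apply] at h5
    have h6 := Prod.ext_iff.mp h5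
    exact ⟨h6.1, h6.2⟩
  have hgat : ContinuousAt g s₀ := hgcont.continuousAt (hU₁open.mem_nhds hs₀U₁)
  have hposopen : IsOpen {w : Fin N → ℝ | ∀ i, 0 < w i} := by
    have he : {w : Fin N → ℝ | ∀ i, 0 < w i} = Set.univ.pi fun _ => Ioi (0:ℝ) := by
      ext w; simp [Set.mem_pi, mem_Ioi]
    rw [he]
    exact isOpen_set_pi finite_univ fun i _ => isOpen_Ioi
  have hV : g ⁻¹' {w | ∀ i, 0 < w i} ∈ 𝓝 s₀ := by
    apply hgat.preimage_mem_nhds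
    apply hposopen.mem_nhds
    rw [hg₀]
    exact hw₀pos
  refine ⟨U₁ ∩ g ⁻¹' {w | ∀ i, 0 < w i},
    Filter.inter_mem (hU₁open.mem_nhds hs₀U₁) hV, g, hgcont.mono inter_subset_left, ?_⟩
  rintro s ⟨hs1, hs2⟩
  exact ⟨hs2, (hgT s hs1).2, (hgT s hs1).1⟩

end ParamCara

/-- Parametric Carathéodory theorem: continuous barycentric coordinates exist for a
continuous family of points whose convex hull interior contains a continuous target. -/
theorem parametric_caratheodory {n N : ℕ} (p : Fin N → ℝ → EuclideanSpace ℝ (Fin n))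
    (x : ℝ → EuclideanSpace ℝ (Fin n))
    (hp : ∀ i, ContinuousOn (p i) (Icc 0 1)) (hx : ContinuousOn x (Icc 0 1))
    (hmem : ∀ t ∈ Icc (0 : ℝ) 1,
      x t ∈ interior (convexHull ℝ (Set.range fun i => p i t))) :
    ∃ a : Fin N → ℝ → ℝ, (∀ i, ContinuousOn (a i) (Icc 0 1)) ∧
      ∀ t ∈ Icc (0 : ℝ) 1, (∀ i, 0 < a i t) ∧ (∑ i, a i t = 1) ∧
        (∑ i, a i t • p i t = x t) := by
  classical
  set tset : ↥(Icc (0:ℝ) 1) → Set (Fin N → ℝ) := fun s =>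
    {w | (∀ i, 0 < w i) ∧ (∑ i, w i = 1) ∧ (∑ i, w i • p i ↑s = x ↑s)} with htset
  have htconv : ∀ s, Convex ℝ (tset s) := by
    intro s
    have h1 : Convex ℝ {w : Fin N → ℝ | ∀ i, 0 < w i} := by
      have he : {w : Fin N → ℝ | ∀ i, 0 < w i} = Set.univ.pi fun _ => Ioi (0:ℝ) := by
        ext w; simp [Set.mem_pi, mem_Ioi]
      rw [he]
      exact convex_pi fun i _ => convex_Ioi 0
    have h2 : Convex ℝ {w : Fin N → ℝ | ∑ i, w i = 1} := by
      have he : {w : Fin N → ℝ | ∑ i, w i = 1} = (sumL N) ⁻¹' {1} := by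
        ext w; simp
      rw [he]
      exact (convex_singleton 1).linear_preimage _
    have h3 : Convex ℝ {w : Fin N → ℝ | ∑ i, w i • p i ↑s = x ↑s} := by
      have he : {w : Fin N → ℝ | ∑ i, w i • p i ↑s = x ↑s}
          = (combL fun i => p i ↑s) ⁻¹' {x ↑s} := by
        ext w; simp
      rw [he]
      exact (convex_singleton _).linear_preimage _
    have he : tset s = {w : Fin N → ℝ | ∀ i, 0 < w i} ∩
        ({w : Fin N → ℝ | ∑ i, w i = 1} ∩ {w : Fin N → ℝ | ∑ i, w i • p i ↑s = x ↑s}) := by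
      ext w
      simp only [htset, mem_setOf_eq, mem_inter_iff]
    rw [he]
    exact h1.inter (h2.inter h3)
  obtain ⟨G, hG⟩ := exists_continuous_forall_mem_convex_of_local htconv
    (fun s₀ => by
      obtain ⟨U, hU, g, hgc, hgm⟩ := local_selection p x hp hx hmem s₀
      exact ⟨U, hU, g, hgc, fun s hs => hgm s hs⟩)
  refine ⟨fun i t => G (projIcc 0 1 zero_le_one t) i, ?_, ?_⟩
  · intro i
    exact ((continuous_apply i).comp (G.continuous.comp continuous_projIcc)).continuousOn
  · intro t ht
    have h := hG (projIcc 0 1 zero_le_one t)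
    rw [projIcc_of_mem zero_le_one ht] at h
    refine ⟨fun i => ?_, ?_, ?_⟩
    · simpa [projIcc_of_mem zero_le_one ht] using h.1 i
    · simpa [projIcc_of_mem zero_le_one ht] using h.2.1
    · simpa [projIcc_of_mem zero_le_one ht] using h.2.2
end

section
/- Local parametric Carathéodory with smooth data: let p₁, …, p_N : [0,1] → ℝⁿ be C^k maps and x : [0,1] → ℝⁿ a C^k map with x(t) in the interior of conv{pᵢ(t)} for all t. Then near any t₀ ∈ [0,1] there exist C^k functions aᵢ(t) > 0 with Σ aᵢ(t) = 1 and Σ aᵢ(t)pᵢ(t) = x(t). -/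
open Set

section Aux

open Matrix

/-- Auxiliary matrix: rows are the coordinates of the points, plus a row of ones. -/
noncomputable def Mmat {n N : ℕ} (q : Fin N → EuclideanSpace ℝ (Fin n)) :
    Matrix (Fin n ⊕ Unit) (Fin N) ℝ :=
  Matrix.of fun r j => Sum.elim (fun r' => q j r') (fun _ => (1:ℝ)) r

lemma vecMul_Mmat_inj {n N : ℕ} (q : Fin N → EuclideanSpace ℝ (Fin n))
    (z : EuclideanSpace ℝ (Fin n))
    (hz : z ∈ interior (convexHull ℝ (Set.range q)))
    (v : Fin n ⊕ Unit → ℝ) (hv : v ᵥ* Mmat q = 0) : v = 0 := by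
  have hNe : (Set.range q).Nonempty := by
    rcases Set.eq_empty_or_nonempty (Set.range q) with h | h
    · rw [h] at hz; simp at hz
    · exact h
  obtain ⟨-, j₀, -⟩ := hNe
  have heq : ∀ j, (∑ r, v (Sum.inl r) * q j r) + v (Sum.inr ()) = 0 := by
    intro j
    have := congrFun hv j
    simpa [vecMul, dotProduct, Mmat, Fintype.sum_sum_type] using this
  set f : EuclideanSpace ℝ (Fin n) →L[ℝ] ℝ :=
    ∑ r, v (Sum.inl r) • EuclideanSpace.proj r with hf
  have hfapp : ∀ y : EuclideanSpace ℝ (Fin n), f y = ∑ r, v (Sum.inl r) * y r := by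
    intro y; simp [hf, ContinuousLinearMap.sum_apply]
  have hf0 : f = 0 := by
    by_contra hne
    obtain ⟨y₀, hy₀⟩ : ∃ y, f y ≠ 0 := by
      by_contra h; push_neg at h; exact hne (by ext y; simp [h y])
    have hsurj : Function.Surjective f := by
      intro c
      exact ⟨(c / f y₀) • y₀, by simp [div_mul_cancel₀, hy₀]⟩
    have hopenmap : IsOpenMap f := f.isOpenMap hsurj
    set S : Set (EuclideanSpace ℝ (Fin n)) := f ⁻¹' {-v (Sum.inr ())} with hS
    have hrange : Set.range q ⊆ S := by
      rintro - ⟨j, rfl⟩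
      simp only [hS, Set.mem_preimage, Set.mem_singleton_iff, hfapp]
      linarith [heq j]
    have hhull : convexHull ℝ (Set.range q) ⊆ S :=
      convexHull_min hrange (by rw [hS]; exact (convex_singleton (-v (Sum.inr ()))).linear_preimage (f : EuclideanSpace ℝ (Fin n) →ₗ[ℝ] ℝ))
    have hzS : z ∈ interior S := interior_mono hhull hz
    have hopen : IsOpen (f '' interior S) := hopenmap _ isOpen_interior
    have hmemim : f z ∈ f '' interior S := ⟨z, hzS, rfl⟩
    have hsub : f '' interior S ⊆ {-v (Sum.inr ())} := by
      rintro - ⟨y, hy, rfl⟩; exact Set.mem_preimage.mp (interior_subset hy)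
    obtain ⟨ε, hε, hball⟩ := Metric.isOpen_iff.1 hopen _ hmemim
    have h1 : f z + ε/2 ∈ Metric.ball (f z) ε := by
      rw [Metric.mem_ball, Real.dist_eq]
      rw [add_sub_cancel_left, abs_of_pos (by linarith)]
      linarith
    have h2 := hsub (hball h1)
    have h3 := hsub hmemim
    simp only [Set.mem_singleton_iff] at h2 h3
    linarith
  have hvl : ∀ r, v (Sum.inl r) = 0 := by
    intro r
    have := DFunLike.congr_fun hf0 (EuclideanSpace.single r 1)
    simpa [hfapp, EuclideanSpace.single_apply, Finset.sum_ite_eq'] using this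
  have hvr : v (Sum.inr ()) = 0 := by
    have := heq j₀
    simp [hvl] at this; exact this
  ext r
  rcases r with r | r
  · exact hvl r
  · cases r; exact hvr

lemma detG_ne_zero {n N : ℕ} (M : Matrix (Fin n ⊕ Unit) (Fin N) ℝ)
    (hinj : ∀ v : Fin n ⊕ Unit → ℝ, v ᵥ* M = 0 → v = 0) : (M * Mᵀ).det ≠ 0 := by
  intro hdet
  obtain ⟨v, hv0, hv⟩ := (Matrix.exists_mulVec_eq_zero_iff).2 hdet
  apply hv0
  have h1 : v ⬝ᵥ ((M * Mᵀ) *ᵥ v) = (v ᵥ* M) ⬝ᵥ (v ᵥ* M) := by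
    rw [← Matrix.mulVec_mulVec, dotProduct_mulVec, Matrix.mulVec_transpose]
  rw [hv] at h1
  have h2 : (v ᵥ* M) = 0 := by
    have hsum : ∑ j, (v ᵥ* M) j * (v ᵥ* M) j = 0 := by
      simpa [dotProduct] using h1.symm
    funext j
    have := (Finset.sum_eq_zero_iff_of_nonneg
      (fun j _ => mul_self_nonneg ((v ᵥ* M) j))).1 hsum j (Finset.mem_univ j)
    exact mul_self_eq_zero.1 this
  exact hinj v h2

lemma exists_pos_weights_s5 {n N : ℕ} (hN : 0 < N) (q : Fin N → EuclideanSpace ℝ (Fin n))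
    (z : EuclideanSpace ℝ (Fin n)) (hz : z ∈ interior (convexHull ℝ (Set.range q))) :
    ∃ a : Fin N → ℝ, (∀ i, 0 < a i) ∧ (∑ i, a i = 1) ∧ (∑ i, a i • q i = z) := by
  obtain ⟨ε, hε, hball⟩ := Metric.mem_nhds_iff.1 (mem_interior_iff_mem_nhds.1 hz)
  set cbar : EuclideanSpace ℝ (Fin n) := (N : ℝ)⁻¹ • ∑ j, q j with hcbar
  set δ : ℝ := ε / (2 * (‖z - cbar‖ + 1)) with hδ
  have hδpos : 0 < δ := by
    apply div_pos hε
    positivity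
  have hynorm : ‖(z + δ • (z - cbar)) - z‖ < ε := by
    rw [add_sub_cancel_left, norm_smul]
    have h1 : ‖z - cbar‖ < ‖z - cbar‖ + 1 := by linarith
    have h2 : ‖δ‖ = δ := abs_of_pos hδpos
    rw [h2, hδ]
    rw [div_mul_eq_mul_div, div_lt_iff₀ (by positivity)]
    have hn : (0:ℝ) ≤ ‖z - cbar‖ := norm_nonneg _
    nlinarith
  have hy : z + δ • (z - cbar) ∈ convexHull ℝ (Set.range q) := by
    apply hball
    rw [Metric.mem_ball, dist_eq_norm]
    exact hynorm
  rw [convexHull_range_eq_exists_affineCombination] at hy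
  obtain ⟨s, w, hw0, hw1, hwy⟩ := hy
  rw [Finset.affineCombination_eq_linear_combination s q w hw1] at hwy
  set c : Fin N → ℝ := fun j => if j ∈ s then w j else 0 with hc
  have hc0 : ∀ j, 0 ≤ c j := by
    intro j; rw [hc]; dsimp only; split
    · exact hw0 j ‹_›
    · exact le_refl 0
  have hcsum : ∑ j, c j = 1 := by
    rw [hc]
    rw [Finset.sum_ite_mem, Finset.univ_inter]
    exact hw1
  have hcy : ∑ j, c j • q j = z + δ • (z - cbar) := by
    rw [← hwy]
    simp only [hc, ite_smul, zero_smul]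
    rw [Finset.sum_ite_mem, Finset.univ_inter]
  refine ⟨fun j => (c j + δ / N) / (1 + δ), fun j => ?_, ?_, ?_⟩
  · apply div_pos
    · have := hc0 j
      have : 0 < δ / N := div_pos hδpos (by exact_mod_cast hN)
      linarith [hc0 j]
    · linarith
  · rw [← Finset.sum_div]
    rw [Finset.sum_add_distrib, hcsum, Finset.sum_const, Finset.card_univ, Fintype.card_fin]
    rw [nsmul_eq_mul, mul_div_cancel₀ _ (by exact_mod_cast hN.ne' : (N:ℝ) ≠ 0)]
    field_simp
  · have hNne : (N:ℝ) ≠ 0 := by exact_mod_cast hN.ne'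
    have h1δ : (1 + δ) ≠ 0 := by positivity
    have : ∑ j, ((c j + δ / N) / (1 + δ)) • q j
        = (1 + δ)⁻¹ • (∑ j, c j • q j + (δ / N) • ∑ j, q j) := by
      simp only [smul_add, Finset.smul_sum, smul_smul]
      rw [← Finset.sum_add_distrib]
      apply Finset.sum_congr rfl
      intro j _
      rw [← add_smul]
      congr 1
      field_simp
    rw [this, hcy]
    have hcb : (δ / N) • ∑ j, q j = δ • cbar := by
      rw [hcbar, smul_smul, div_eq_mul_inv, mul_comm δ]
    rw [hcb]
    have : z + δ • (z - cbar) + δ • cbar = (1 + δ) • z := by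
      rw [smul_sub, add_smul, one_smul]
      abel
    rw [this, smul_smul, inv_mul_cancel₀ h1δ, one_smul]

lemma contDiffOn_det {ι : Type*} [Fintype ι] [DecidableEq ι] {k : ℕ} {s : Set ℝ}
    {A : ℝ → Matrix ι ι ℝ} (h : ∀ i j, ContDiffOn ℝ k (fun t => A t i j) s) :
    ContDiffOn ℝ k (fun t => (A t).det) s := by
  simp only [Matrix.det_apply']
  apply ContDiffOn.sum
  intro σ _
  exact ContDiffOn.mul contDiffOn_const (contDiffOn_prod fun i _ => h _ _)

lemma contDiffOn_adjugate {ι : Type*} [Fintype ι] [DecidableEq ι] {k : ℕ} {s : Set ℝ}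
    {A : ℝ → Matrix ι ι ℝ} (h : ∀ i j, ContDiffOn ℝ k (fun t => A t i j) s) (i j : ι) :
    ContDiffOn ℝ k (fun t => (A t).adjugate i j) s := by
  have hadj : ∀ t, (A t).adjugate i j
      = (((A t).transpose).updateCol j (Pi.single i 1)).det := by
    intro t
    rw [Matrix.adjugate_def]
    simp [Matrix.cramer_apply]
  simp only [hadj]
  apply contDiffOn_det
  intro i' j'
  by_cases hj : j' = j
  · subst hj
    simp only [Matrix.updateCol_apply, if_pos rfl]
    exact contDiffOn_const
  · simp only [Matrix.updateCol_apply, if_neg hj, Matrix.transpose_apply]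
    exact h _ _

end Aux

open Matrix

/-- Local parametric Carathéodory with Cᵏ data: near any parameter there are Cᵏ
positive barycentric coordinates. -/
theorem local_parametric_caratheodory_smooth {n N k : ℕ}
    (p : Fin N → ℝ → EuclideanSpace ℝ (Fin n)) (x : ℝ → EuclideanSpace ℝ (Fin n))
    (hp : ∀ i, ContDiffOn ℝ k (p i) (Icc 0 1)) (hx : ContDiffOn ℝ k x (Icc 0 1))
    (hmem : ∀ t ∈ Icc (0 : ℝ) 1,
      x t ∈ interior (convexHull ℝ (Set.range fun i => p i t)))
    (t₀ : ℝ) (ht₀ : t₀ ∈ Icc (0 : ℝ) 1) :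
    ∃ u ∈ nhdsWithin t₀ (Icc (0 : ℝ) 1), ∃ a : Fin N → ℝ → ℝ,
      (∀ i, ContDiffOn ℝ k (a i) u) ∧
      ∀ t ∈ u, (∀ i, 0 < a i t) ∧ (∑ i, a i t = 1) ∧ (∑ i, a i t • p i t = x t) := by
  classical
  rcases Nat.eq_zero_or_pos N with hN0 | hN
  · exfalso
    have h := hmem t₀ ht₀
    subst hN0
    simp [Set.range_eq_empty] at h
  set M : ℝ → Matrix (Fin n ⊕ Unit) (Fin N) ℝ := fun t => Mmat (fun j => p j t) with hM
  set b : ℝ → (Fin n ⊕ Unit) → ℝ := fun t => Sum.elim (fun r => x t r) (fun _ => 1) with hb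
  set G : ℝ → Matrix (Fin n ⊕ Unit) (Fin n ⊕ Unit) ℝ := fun t => M t * (M t)ᵀ with hG
  have hMentry : ∀ r j, ContDiffOn ℝ k (fun t => M t r j) (Icc 0 1) := by
    rintro (r | r) j
    · have := (EuclideanSpace.proj (𝕜 := ℝ) (r : Fin n)).contDiff.comp_contDiffOn (hp j)
      simpa [hM, Mmat, Function.comp_def] using this
    · simp only [hM, Mmat, Matrix.of_apply, Sum.elim_inr]
      exact contDiffOn_const
  have hbentry : ∀ r, ContDiffOn ℝ k (fun t => b t r) (Icc 0 1) := by
    rintro (r | r)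
    · have := (EuclideanSpace.proj (𝕜 := ℝ) (r : Fin n)).contDiff.comp_contDiffOn hx
      simpa [hb, Function.comp_def] using this
    · simp only [hb, Sum.elim_inr]
      exact contDiffOn_const
  have hGentry : ∀ i j, ContDiffOn ℝ k (fun t => G t i j) (Icc 0 1) := by
    intro i j
    simp only [hG, Matrix.mul_apply, Matrix.transpose_apply]
    exact ContDiffOn.sum fun l _ => (hMentry i l).mul (hMentry j l)
  have hdet : ContDiffOn ℝ k (fun t => (G t).det) (Icc 0 1) := contDiffOn_det hGentry
  have hdet0 : (G t₀).det ≠ 0 :=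
    detG_ne_zero _ (fun v hv => vecMul_Mmat_inj _ _ (hmem t₀ ht₀) v hv)
  have hdetne : {t | (G t).det ≠ 0} ∈ nhdsWithin t₀ (Icc 0 1) := by
    have hcw : ContinuousWithinAt (fun t => (G t).det) (Icc 0 1) t₀ :=
      (hdet.continuousOn).continuousWithinAt ht₀
    exact hcw.preimage_mem_nhdsWithin (isOpen_ne.mem_nhds hdet0)
  obtain ⟨v, hvopen, hvt₀, hvsub⟩ := mem_nhdsWithin.1 hdetne
  set s₁ := v ∩ Icc (0:ℝ) 1 with hs₁
  have hs₁sub : s₁ ⊆ Icc 0 1 := inter_subset_right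
  have ht₀s₁ : t₀ ∈ s₁ := ⟨hvt₀, ht₀⟩
  have hdets₁ : ∀ t ∈ s₁, (G t).det ≠ 0 := fun t ht => hvsub ht
  obtain ⟨a₀, ha₀pos, ha₀sum, ha₀pt⟩ :=
    exists_pos_weights_s5 hN (fun j => p j t₀) (x t₀) (hmem t₀ ht₀)
  have hMa₀ : M t₀ *ᵥ a₀ = b t₀ := by
    funext r
    rcases r with r | r
    · have h := congrArg (EuclideanSpace.proj (𝕜 := ℝ) (r : Fin n)) ha₀pt
      simp only [map_sum, _root_.map_smul, smul_eq_mul, PiLp.proj_apply] at h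
      simp only [hM, hb, Matrix.mulVec, dotProduct, Mmat, Matrix.of_apply,
        Sum.elim_inl]
      rw [← h]
      exact Finset.sum_congr rfl fun j _ => mul_comm _ _
    · simp only [hM, hb, Matrix.mulVec, dotProduct, Mmat, Matrix.of_apply,
        Sum.elim_inr, one_mul]
      exact ha₀sum
  set a : Fin N → ℝ → ℝ :=
    fun i t => a₀ i + ((M t)ᵀ *ᵥ ((G t)⁻¹ *ᵥ (b t - M t *ᵥ a₀))) i with ha
  have hGinv : ∀ i j, ContDiffOn ℝ k (fun t => (G t)⁻¹ i j) s₁ := by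
    intro i j
    have h1 : ∀ t ∈ s₁, ((G t).det)⁻¹ * (G t).adjugate i j = (G t)⁻¹ i j := by
      intro t ht
      rw [Matrix.inv_def, Matrix.smul_apply, Ring.inverse_eq_inv', smul_eq_mul]
    apply ContDiffOn.congr _ (fun t ht => (h1 t ht).symm)
    exact ((hdet.mono hs₁sub).inv hdets₁).mul
      (contDiffOn_adjugate (fun i j => (hGentry i j).mono hs₁sub) i j)
  have hasmooth : ∀ i, ContDiffOn ℝ k (a i) s₁ := by
    intro i
    simp only [ha, Matrix.mulVec, dotProduct, Matrix.transpose_apply, Pi.sub_apply]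
    apply ContDiffOn.add contDiffOn_const
    apply ContDiffOn.sum; intro rr _
    apply ((hMentry rr i).mono hs₁sub).mul
    apply ContDiffOn.sum; intro rr' _
    apply (hGinv rr rr').mul
    exact ((hbentry rr').mono hs₁sub).sub
      (ContDiffOn.sum fun j _ => ((hMentry rr' j).mono hs₁sub).mul contDiffOn_const)
  have hid : ∀ t ∈ s₁, M t *ᵥ (fun i => a i t) = b t := by
    intro t ht
    have hfun : (fun i => a i t) = a₀ + (M t)ᵀ *ᵥ ((G t)⁻¹ *ᵥ (b t - M t *ᵥ a₀)) := by
      funext i; simp [ha]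
    rw [hfun, Matrix.mulVec_add, Matrix.mulVec_mulVec, Matrix.mulVec_mulVec]
    have : M t * (M t)ᵀ * (G t)⁻¹ = 1 :=
      Matrix.mul_nonsing_inv (G t) (isUnit_iff_ne_zero.2 (hdets₁ t ht))
    rw [this, Matrix.one_mulVec, add_sub_cancel]
  have hat₀ : ∀ i, a i t₀ = a₀ i := by
    intro i
    have hz : b t₀ - M t₀ *ᵥ a₀ = 0 := by rw [hMa₀, sub_self]
    simp [ha, hz, Matrix.mulVec_zero]
  have hposmem : ∀ i, ∃ w, IsOpen w ∧ t₀ ∈ w ∧ ∀ t ∈ w ∩ s₁, 0 < a i t := by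
    intro i
    have hc : ContinuousWithinAt (a i) s₁ t₀ :=
      (hasmooth i).continuousOn.continuousWithinAt ht₀s₁
    have hIoi : Ioi (0:ℝ) ∈ nhds (a i t₀) := Ioi_mem_nhds (by rw [hat₀]; exact ha₀pos i)
    have hmem' : (a i) ⁻¹' Ioi 0 ∈ nhdsWithin t₀ s₁ := hc.preimage_mem_nhdsWithin hIoi
    obtain ⟨w, hwo, hwt, hws⟩ := mem_nhdsWithin.1 hmem'
    exact ⟨w, hwo, hwt, fun t ht => hws ht⟩
  choose w hwopen hwt₀ hwpos using hposmem
  refine ⟨(v ∩ ⋂ i, w i) ∩ Icc 0 1, ?_, a, ?_, ?_⟩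
  · exact mem_nhdsWithin.2 ⟨v ∩ ⋂ i, w i, hvopen.inter (isOpen_iInter_of_finite hwopen),
      ⟨hvt₀, mem_iInter.2 hwt₀⟩, subset_rfl⟩
  · intro i
    exact (hasmooth i).mono fun t ht => ⟨ht.1.1, ht.2⟩
  · intro t ht
    have hts₁ : t ∈ s₁ := ⟨ht.1.1, ht.2⟩
    have hpos : ∀ i, 0 < a i t := fun i => hwpos i t ⟨mem_iInter.1 ht.1.2 i, hts₁⟩
    have hidt := hid t hts₁
    refine ⟨hpos, ?_, ?_⟩
    · have h := congrFun hidt (Sum.inr ())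
      simpa [Matrix.mulVec, dotProduct, hM, Mmat, hb] using h
    · ext r
      have hr := congrFun hidt (Sum.inl r)
      simp only [Matrix.mulVec, dotProduct, hM, Mmat, Matrix.of_apply, Sum.elim_inl,
        hb] at hr
      have hproj := congrArg (EuclideanSpace.proj (𝕜 := ℝ) (r : Fin n))
        (rfl : (∑ i, a i t • p i t) = ∑ i, a i t • p i t)
      calc (∑ i, a i t • p i t) r
          = ∑ i, a i t * p i t r := by
            rw [show ((∑ i, a i t • p i t) r)
              = EuclideanSpace.proj (𝕜 := ℝ) (r : Fin n) (∑ i, a i t • p i t) from rfl]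
            simp only [map_sum, _root_.map_smul, smul_eq_mul, PiLp.proj_apply]
        _ = x t r := by rw [← hr]; exact Finset.sum_congr rfl fun j _ => mul_comm _ _
end

section
/- Disjointification of continuous point selections: let S : [0,1] → Iᴺ (I = [a,b], N ≥ 2) be a continuous map. Then for every ε > 0 there exists a continuous map S̃ : [0,1] → Iᴺ whose N coordinates are pairwise distinct at every t, and such that for every t the sets {S(t)ᵢ} and {S̃(t)ᵢ} are within Hausdorff distance ε of each other as subsets of I. -/
open Set Finset

/-- The `k`-th order statistic (k-th smallest value) of a tuple. -/
noncomputable def ordStat (N : ℕ) (v : Fin N → ℝ) (k : Fin N) : ℝ :=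
  (Finset.univ.powersetCard (k.1 + 1)).inf'
    (Finset.powersetCard_nonempty.2 (by simp [Nat.succ_le_of_lt k.2]))
    (fun A => if h : A.Nonempty then A.sup' h v else 0)

lemma ordStat_mem_range {N : ℕ} (v : Fin N → ℝ) (k : Fin N) :
    ∃ i, v i = ordStat N v k := by
  obtain ⟨A, hA, hAe⟩ := Finset.exists_mem_eq_inf'
    (Finset.powersetCard_nonempty.2 (by simp [Nat.succ_le_of_lt k.2] : k.1 + 1 ≤ (Finset.univ : Finset (Fin N)).card))
    (fun A => if h : A.Nonempty then A.sup' h v else 0)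
  have hAne : A.Nonempty := by
    rw [Finset.mem_powersetCard] at hA
    exact Finset.card_pos.1 (by omega)
  obtain ⟨i, _, hi⟩ := Finset.exists_mem_eq_sup' hAne v
  exact ⟨i, by rw [ordStat, hAe, dif_pos hAne, hi]⟩

lemma exists_ordStat_eq {N : ℕ} (v : Fin N → ℝ) (i : Fin N) :
    ∃ k, ordStat N v k = v i := by
  classical
  set F : Finset (Fin N) := Finset.univ.filter (fun j => v j < v i) with hF
  have hiF : i ∉ F := by simp [hF]
  have hk : F.card < N := by
    have h1 : F.card ≤ (Finset.univ.erase i).card :=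
      Finset.card_le_card (fun j hj => Finset.mem_erase.2 ⟨fun e => hiF (e ▸ hj), Finset.mem_univ _⟩)
    have h2 : (Finset.univ.erase i).card = N - 1 := by
      rw [Finset.card_erase_of_mem (Finset.mem_univ i)]; simp
    have h3 : 0 < N := i.pos
    omega
  refine ⟨⟨F.card, hk⟩, le_antisymm ?_ ?_⟩
  · -- inf' ≤ v i via the set insert i F
    have hBmem : insert i F ∈ Finset.univ.powersetCard (F.card + 1) := by
      rw [Finset.mem_powersetCard]
      exact ⟨Finset.subset_univ _, by rw [Finset.card_insert_of_notMem hiF]⟩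
    rw [ordStat]
    refine le_trans (Finset.inf'_le (fun A => if h : A.Nonempty then A.sup' h v else 0) hBmem) ?_
    rw [dif_pos ⟨i, Finset.mem_insert_self i F⟩]
    apply Finset.sup'_le
    intro j hj
    rcases Finset.mem_insert.1 hj with h | h
    · exact h ▸ le_rfl
    · exact le_of_lt ((Finset.mem_filter.1 h).2)
  · apply Finset.le_inf'
    intro A hA
    rw [Finset.mem_powersetCard] at hA
    have hAc : A.card = F.card + 1 := hA.2
    have hAne : A.Nonempty := Finset.card_pos.1 (by omega)
    rw [dif_pos hAne]
    obtain ⟨j, hjA, hj⟩ : ∃ j ∈ A, v i ≤ v j := by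
      by_contra h
      push_neg at h
      have : A ⊆ F := fun j hj => Finset.mem_filter.2 ⟨Finset.mem_univ _, h j hj⟩
      have := Finset.card_le_card this
      omega
    exact le_trans hj (Finset.le_sup' v hjA)

lemma ordStat_mono {N : ℕ} (v : Fin N → ℝ) {k m : Fin N} (hkm : k ≤ m) :
    ordStat N v k ≤ ordStat N v m := by
  apply Finset.le_inf'
  intro A hA
  rw [Finset.mem_powersetCard] at hA
  obtain ⟨B, hBA, hBcard⟩ := Finset.exists_subset_card_eq (s := A) (n := k.1 + 1) (by omega)
  have hBne : B.Nonempty := Finset.card_pos.1 (by omega)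
  have hAne : A.Nonempty := hBne.mono hBA
  have hBmem : B ∈ Finset.univ.powersetCard (k.1 + 1) := by
    rw [Finset.mem_powersetCard]; exact ⟨Finset.subset_univ _, hBcard⟩
  calc ordStat N v k ≤ _ := Finset.inf'_le _ hBmem
    _ ≤ _ := by
        rw [dif_pos hBne, dif_pos hAne]
        exact Finset.sup'_mono v hBA hBne

lemma ordStat_continuous {N : ℕ} (k : Fin N) :
    Continuous (fun v : Fin N → ℝ => ordStat N v k) := by
  apply Continuous.finset_inf'_apply
  intro A _
  by_cases h : A.Nonempty
  · simp only [dif_pos h]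
    exact Continuous.finset_sup'_apply h (fun i _ => continuous_apply i)
  · simp only [dif_neg h]
    exact continuous_const

/-- Disjointification of continuous point selections: a continuous `N`-tuple of points
of `I = [a,b]` can be approximated, in the Hausdorff distance on subsets of `I`, by a
continuous `N`-tuple with pairwise distinct coordinates. -/
theorem disjointification {N : ℕ} (hN : 2 ≤ N) (a b : ℝ) (hab : a < b)
    (S : ℝ → Fin N → ℝ) (hS : ContinuousOn S (Icc 0 1))
    (hSval : ∀ t ∈ Icc (0 : ℝ) 1, ∀ i, S t i ∈ Icc a b)
    (ε : ℝ) (hε : 0 < ε) :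
    ∃ T : ℝ → Fin N → ℝ, ContinuousOn T (Icc 0 1) ∧
      (∀ t ∈ Icc (0 : ℝ) 1, ∀ i, T t i ∈ Icc a b) ∧
      (∀ t ∈ Icc (0 : ℝ) 1, Function.Injective (T t)) ∧
      (∀ t ∈ Icc (0 : ℝ) 1,
        Metric.hausdorffDist (Set.range (S t)) (Set.range (T t)) ≤ ε) := by
  classical
  have hba : (0:ℝ) < b - a := by linarith
  obtain ⟨m, hm_def⟩ : ∃ m, m = min ε (b - a) := ⟨_, rfl⟩
  have hm : 0 < m := hm_def ▸ lt_min hε hba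
  have hmε : m ≤ ε := hm_def ▸ min_le_left _ _
  have hmba : m ≤ b - a := hm_def ▸ min_le_right _ _
  have hNpos : (0:ℝ) < N := by positivity
  obtain ⟨δ, hδ_def⟩ : ∃ d, d = m / (2 * N) := ⟨_, rfl⟩
  have hδ : 0 < δ := by rw [hδ_def]; positivity
  have hNδ : (N:ℝ) * δ = m / 2 := by
    rw [hδ_def]; field_simp
  obtain ⟨lam, hlam_def⟩ : ∃ l, l = 1 - (N:ℝ) * δ / (b - a) := ⟨_, rfl⟩
  have hfrac : (N:ℝ) * δ / (b - a) ≤ 1/2 := by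
    rw [hNδ, div_le_iff₀ hba]; linarith
  have hfrac0 : 0 ≤ (N:ℝ) * δ / (b - a) := by positivity
  have hlam_lb : (1:ℝ)/2 ≤ lam := by rw [hlam_def]; linarith
  have hlam_ub : lam ≤ 1 := by rw [hlam_def]; linarith
  have hlamba : lam * (b - a) = (b - a) - (N:ℝ) * δ := by
    rw [hlam_def]; field_simp
  obtain ⟨T, hT_def⟩ : ∃ T : ℝ → Fin N → ℝ,
      T = fun t k => a + lam * (ordStat N (S t) k - a) + (k : ℝ) * δ := ⟨_, rfl⟩
  -- bounds for each order statistic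
  have hw : ∀ t ∈ Icc (0:ℝ) 1, ∀ k : Fin N, ordStat N (S t) k ∈ Icc a b := by
    intro t ht k
    obtain ⟨i, hi⟩ := ordStat_mem_range (S t) k
    exact hi ▸ hSval t ht i
  have hkN : ∀ k : Fin N, (k : ℝ) ≤ (N:ℝ) - 1 := by
    intro k
    have : (k.1 : ℕ) + 1 ≤ N := k.2
    have := Nat.cast_le (α := ℝ) |>.2 this
    push_cast at this
    linarith
  -- per-point distance bound
  have hdist : ∀ t ∈ Icc (0:ℝ) 1, ∀ k : Fin N,
      |T t k - ordStat N (S t) k| ≤ ε := by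
    intro t ht k
    obtain ⟨hwa, hwb⟩ := hw t ht k
    have h1 : (1 - lam) * (ordStat N (S t) k - a) ≤ (1 - lam) * (b - a) :=
      mul_le_mul_of_nonneg_left (by linarith) (by linarith)
    have h2 : 0 ≤ (1 - lam) * (ordStat N (S t) k - a) :=
      mul_nonneg (by linarith) (by linarith)
    have h3 : (k:ℝ) * δ ≤ ((N:ℝ) - 1) * δ := mul_le_mul_of_nonneg_right (hkN k) hδ.le
    have h4 : 0 ≤ (k:ℝ) * δ := mul_nonneg (Nat.cast_nonneg _) hδ.le
    have hTw : T t k - ordStat N (S t) k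
        = (k:ℝ) * δ - (1 - lam) * (ordStat N (S t) k - a) := by
      rw [hT_def]; ring
    rw [hTw]
    rw [abs_le]
    constructor <;> nlinarith
  refine ⟨T, ?_, ?_, ?_, ?_⟩
  · rw [continuousOn_pi]
    intro k
    have h1 : Continuous fun v : Fin N → ℝ => a + lam * (ordStat N v k - a) + (k:ℝ) * δ :=
      (continuous_const.add (continuous_const.mul
        ((ordStat_continuous k).sub continuous_const))).add continuous_const
    simp only [hT_def]
    exact h1.comp_continuousOn hS
  · intro t ht k
    obtain ⟨hwa, hwb⟩ := hw t ht k
    have h2 : lam * (ordStat N (S t) k - a) ≤ lam * (b - a) :=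
      mul_le_mul_of_nonneg_left (by linarith) (by linarith)
    have h3 : (k:ℝ) * δ ≤ ((N:ℝ) - 1) * δ := mul_le_mul_of_nonneg_right (hkN k) hδ.le
    have h4 : 0 ≤ (k:ℝ) * δ := mul_nonneg (Nat.cast_nonneg _) hδ.le
    have h5 : 0 ≤ lam * (ordStat N (S t) k - a) := mul_nonneg (by linarith) (by linarith)
    constructor
    · show a ≤ T t k; rw [hT_def]; simp only; linarith
    · show T t k ≤ b; rw [hT_def]; simp only; nlinarith
  · intro t ht
    have key : ∀ k l : Fin N, k < l → T t k < T t l := by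
      intro k l hkl
      have hmono := ordStat_mono (S t) hkl.le
      have h1 : 0 ≤ lam * (ordStat N (S t) l - ordStat N (S t) k) :=
        mul_nonneg (by linarith) (by linarith)
      have hkl' : (k:ℝ) + 1 ≤ (l:ℝ) := by
        have : k.1 + 1 ≤ l.1 := hkl
        exact_mod_cast this
      have : T t l - T t k
          = lam * (ordStat N (S t) l - ordStat N (S t) k) + ((l:ℝ) - (k:ℝ)) * δ := by
        rw [hT_def]; ring
      nlinarith
    intro k l hkl
    rcases lt_trichotomy k l with h | h | h
    · exact absurd hkl (ne_of_lt (key k l h))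
    · exact h
    · exact absurd hkl.symm (ne_of_lt (key l k h))
  · intro t ht
    apply Metric.hausdorffDist_le_of_mem_dist hε.le
    · rintro x ⟨i, rfl⟩
      obtain ⟨k, hk⟩ := exists_ordStat_eq (S t) i
      refine ⟨T t k, mem_range_self k, ?_⟩
      rw [Real.dist_eq, ← hk, abs_sub_comm]
      exact hdist t ht k
    · rintro y ⟨k, rfl⟩
      obtain ⟨i, hi⟩ := ordStat_mem_range (S t) k
      refine ⟨S t i, mem_range_self i, ?_⟩
      rw [Real.dist_eq, hi]
      exact hdist t ht k
end

section
/- If f : [a,b] → ℝⁿ is a Cⁿ map whose derivatives f'(s), f''(s), …, f⁽ⁿ⁾(s) are linearly independent at some point s ∈ [a,b], then the image of f is nonflat, i.e., the convex hull of f([a,b]) has nonempty interior in ℝⁿ. -/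
open Set RealInnerProductSpace

/-- If the first `n` derivatives of a Cⁿ curve in ℝⁿ are linearly independent at some
point, then the convex hull of its image has nonempty interior (the curve is nonflat). -/
theorem nonflat_of_linearIndependent_derivs {n : ℕ} (a b : ℝ) (hab : a < b)
    (f : ℝ → EuclideanSpace ℝ (Fin n))
    (hf : ContDiffOn ℝ n f (Icc a b))
    (s : ℝ) (hs : s ∈ Icc a b)
    (hli : LinearIndependent ℝ fun i : Fin n =>
      iteratedDerivWithin (i + 1) f (Icc a b) s) :
    (interior (convexHull ℝ (f '' Icc a b))).Nonempty := by
  rw [interior_convexHull_nonempty_iff_affineSpan_eq_top]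
  by_contra htop
  -- the affine span is nonempty since `f s` belongs to it
  have hne : ((affineSpan ℝ (f '' Icc a b) : AffineSubspace ℝ _) : Set _).Nonempty :=
    ⟨f s, subset_affineSpan ℝ _ (Set.mem_image_of_mem f hs)⟩
  have hdir : (affineSpan ℝ (f '' Icc a b)).direction ≠ ⊤ := by
    intro h
    exact htop ((AffineSubspace.direction_eq_top_iff_of_nonempty hne).1 h)
  -- pick a nonzero vector orthogonal to the direction
  have horth : (affineSpan ℝ (f '' Icc a b)).directionᗮ ≠ ⊥ := by
    intro h
    exact hdir (Submodule.orthogonal_eq_bot_iff.1 h)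
  obtain ⟨v, hvmem, hv0⟩ := Submodule.exists_mem_ne_zero_of_ne_bot horth
  -- v is orthogonal to f t - f s for all t ∈ [a,b]
  have hvf : ∀ t ∈ Icc a b, ⟪v, f t - f s⟫ = 0 := by
    intro t ht
    have hmem : f t - f s ∈ (affineSpan ℝ (f '' Icc a b)).direction := by
      have := AffineSubspace.vsub_mem_direction
        (subset_affineSpan ℝ _ (Set.mem_image_of_mem f ht)) (subset_affineSpan ℝ _ (Set.mem_image_of_mem f hs))
      simpa using this
    exact (Submodule.mem_orthogonal' _ v).1 hvmem _ hmem
  have hud : UniqueDiffOn ℝ (Icc a b) := uniqueDiffOn_Icc hab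
  -- the scalar function ⟪v, f ·⟫ is constant on [a,b]
  have hconst : Set.EqOn (fun t => ((innerSL ℝ v : EuclideanSpace ℝ (Fin n) →L[ℝ] ℝ) ∘ f) t)
      (fun _ => ⟪v, f s⟫) (Icc a b) := by
    intro t ht
    have := hvf t ht
    simp only [inner_sub_right] at this
    simp only [Function.comp, innerSL_apply_apply]
    linarith
  -- hence v is orthogonal to every iterated derivative
  have hkey : ∀ i : Fin n, ⟪v, iteratedDerivWithin (i + 1) f (Icc a b) s⟫ = 0 := by
    intro i
    have hle : (i : ℕ) + 1 ≤ n := i.2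
    have hcomp : iteratedDerivWithin ((i : ℕ) + 1)
        ((innerSL ℝ v : EuclideanSpace ℝ (Fin n) →L[ℝ] ℝ) ∘ f) (Icc a b) s
        = ⟪v, iteratedDerivWithin ((i : ℕ) + 1) f (Icc a b) s⟫ := by
      rw [iteratedDerivWithin_eq_iteratedFDerivWithin,
        (innerSL ℝ v).iteratedFDerivWithin_comp_left (hf s hs) hud hs (by exact_mod_cast hle)]
      simp [iteratedDerivWithin_eq_iteratedFDerivWithin]
    have hzero : iteratedDerivWithin ((i : ℕ) + 1)
        ((innerSL ℝ v : EuclideanSpace ℝ (Fin n) →L[ℝ] ℝ) ∘ f) (Icc a b) s = 0 := by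
      rw [iteratedDerivWithin_congr hconst hs]
      rw [iteratedDerivWithin_eq_iteratedFDerivWithin,
        iteratedFDerivWithin_const_of_ne (Nat.succ_ne_zero _) _ _]
      simp
    rw [← hcomp, hzero]
  -- linear independence implies the derivatives span ℝⁿ, so v = 0, contradiction
  have hspan : Submodule.span ℝ
      (Set.range fun i : Fin n => iteratedDerivWithin (i + 1) f (Icc a b) s) = ⊤ :=
    hli.span_eq_top_of_card_eq_finrank' (by simp)
  have : v ∈ (⊤ : Submodule ℝ (EuclideanSpace ℝ (Fin n)))ᗮ := by
    rw [← hspan]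
    rw [Submodule.mem_orthogonal']
    intro u hu
    induction hu using Submodule.span_induction with
    | mem x hx => obtain ⟨i, rfl⟩ := hx; exact hkey i
    | zero => simp
    | add x y _ _ hx hy => rw [inner_add_right, hx, hy]; ring
    | smul c x _ hx => rw [inner_smul_right, hx]; ring
  rw [Submodule.top_orthogonal_eq_bot, Submodule.mem_bot] at this
  exact hv0 this
end
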